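/- Lower bound for d_max: let (n,k,r,δ) satisfy 0 < r < k ≤ n − ⌈k/r⌉(δ−1), δ ≥ 2, b > a where a = ⌈k/r⌉r − k, b = ⌈n/(r+δ−1)⌉(r+δ−1) − n, let m = ⌈n/(r+δ−1)⌉ − 1 and v = r+δ−1−b − ⌊(r+δ−1−b)/m⌋·m. If δ−1 > (⌈k/r⌉−1)⌊(r+δ−1−b)/m⌋ + min{v, ⌈k/r⌉−1}, then there exists an (n,k,d,r,δ)-matroid with d = n − k + 1 − (⌈k/r⌉−1)(⌊(r+δ−1−b)/m⌋ + δ−1) − min{v, ⌈k/r⌉−1}. -/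

import Mathlib

/-- A set is cyclic if removing any single element does not change its rank. -/
def IsCyclicSet (ρ : Finset ℕ → ℕ) (X : Finset ℕ) : Prop :=
  ∀ x ∈ X, ρ (X.erase x) = ρ X

/-- `(E, ρ)` satisfies the matroid rank axioms. -/
def IsRankFn (E : Finset ℕ) (ρ : Finset ℕ → ℕ) : Prop :=
  (∀ X, X ⊆ E → ρ X ≤ X.card) ∧
  (∀ X Y, X ⊆ Y → Y ⊆ E → ρ X ≤ ρ Y) ∧
  (∀ X Y, X ⊆ E → Y ⊆ E → ρ (X ∪ Y) + ρ (X ∩ Y) ≤ ρ X + ρ Y)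

/-- All-symbol `(r, δ)`-locality. -/
def HasLocality (E : Finset ℕ) (ρ : Finset ℕ → ℕ) (r δ : ℕ) : Prop :=
  ∀ x ∈ E, ∃ S, S ⊆ E ∧ x ∈ S ∧ IsCyclicSet ρ S ∧ S.card ≤ r + δ - 1 ∧
    ∀ L, L ⊆ S → L.card + (δ - 1) = S.card →
      ∀ l ∈ S, l ∉ L → ρ (insert l L) = ρ L

/-- The minimum distance: the minimum size of a circuit of the dual matroid. -/
noncomputable def dmin (E : Finset ℕ) (ρ : Finset ℕ → ℕ) : ℕ :=
  sInf {c : ℕ | ∃ C, C ⊆ E ∧ ρ (E \ C) < ρ E ∧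
    (∀ C', C' ⊂ C → ρ (E \ C') = ρ E) ∧ C.card = c}

/-!
The matroid is the truncation to rank `k` of the direct sum of uniform matroids of rank `r`
on `m` consecutive blocks, the first `v` of length `c + 1` and the others of length
`c = r + δ - 1 + q`; any `r + δ - 1` elements of one block form a locality set. The smallest
dual circuit is the complement of a largest set of rank `< k`. Such a set contains `≥ r`
elements of at most `⌈k/r⌉ - 1` blocks, and each of its elements in the other blocks adds to
its rank, so it is largest when it fills `⌈k/r⌉ - 1` of the longest blocks and has
`(k - 1) mod r` further elements.
-/

open Finset

/-- The rank function of the truncation to rank `k` of the direct sum of the uniform matroids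
`U(r, F i)`, `i < m`. -/
def truncPartitionRank (F : ℕ → Finset ℕ) (m k r : ℕ) (X : Finset ℕ) : ℕ :=
  min k (∑ i ∈ range m, min #(X ∩ F i) r)

section TruncPartitionRank

variable {F : ℕ → Finset ℕ} {m k r : ℕ}

theorem truncPartitionRank_mono {X Y : Finset ℕ} (h : X ⊆ Y) :
    truncPartitionRank F m k r X ≤ truncPartitionRank F m k r Y :=
  min_le_min_left k <| sum_le_sum fun _ _ =>
    min_le_min_right r (card_le_card (inter_subset_inter_right h))

theorem min_card_union_add_min_card_inter_le {α : Type*} [DecidableEq α] (A B : Finset α)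
    (r : ℕ) :
    min #(A ∪ B) r + min #(A ∩ B) r ≤ min #A r + min #B r := by
  have := card_union_add_card_inter A B
  have := card_le_card (inter_subset_left (s₁ := A) (s₂ := B))
  have := card_le_card (inter_subset_right (s₁ := A) (s₂ := B))
  omega

theorem truncPartitionRank_union_add_inter_le (X Y : Finset ℕ) :
    truncPartitionRank F m k r (X ∪ Y) + truncPartitionRank F m k r (X ∩ Y) ≤
      truncPartitionRank F m k r X + truncPartitionRank F m k r Y := by
  have hsum :
      ∑ i ∈ range m, min #((X ∪ Y) ∩ F i) r + ∑ i ∈ range m, min #((X ∩ Y) ∩ F i) r ≤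
      ∑ i ∈ range m, min #(X ∩ F i) r + ∑ i ∈ range m, min #(Y ∩ F i) r := by
    rw [← sum_add_distrib, ← sum_add_distrib]
    refine sum_le_sum fun i _ => ?_
    rw [union_inter_distrib_right, inter_inter_distrib_right]
    exact min_card_union_add_min_card_inter_le _ _ r
  have hX : truncPartitionRank F m k r (X ∩ Y) ≤ truncPartitionRank F m k r X :=
    truncPartitionRank_mono inter_subset_left
  have hY : truncPartitionRank F m k r (X ∩ Y) ≤ truncPartitionRank F m k r Y :=
    truncPartitionRank_mono inter_subset_right
  unfold truncPartitionRank at *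
  omega

theorem sum_card_inter_eq_card_inter_biUnion (hF : (range m : Set ℕ).PairwiseDisjoint F)
    (X : Finset ℕ) : ∑ i ∈ range m, #(X ∩ F i) = #(X ∩ (range m).biUnion F) := by
  rw [inter_biUnion, card_biUnion]
  exact fun i hi j hj hij => (hF hi hj hij).mono inter_subset_right inter_subset_right

theorem truncPartitionRank_le_card (hF : (range m : Set ℕ).PairwiseDisjoint F) (X : Finset ℕ) :
    truncPartitionRank F m k r X ≤ #X :=
  calc truncPartitionRank F m k r X ≤ ∑ i ∈ range m, #(X ∩ F i) :=
        (min_le_right _ _).trans (sum_le_sum fun _ _ => min_le_left _ _)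
    _ ≤ #X := sum_card_inter_eq_card_inter_biUnion hF X ▸ card_le_card inter_subset_left

theorem isRankFn_truncPartitionRank (hF : (range m : Set ℕ).PairwiseDisjoint F)
    (E : Finset ℕ) : IsRankFn E (truncPartitionRank F m k r) :=
  ⟨fun X _ => truncPartitionRank_le_card hF X, fun _ _ h _ => truncPartitionRank_mono h,
    fun X Y _ _ => truncPartitionRank_union_add_inter_le X Y⟩

theorem truncPartitionRank_biUnion (hF : ∀ i ∈ range m, r ≤ #(F i)) (hkm : k ≤ m * r) :
    truncPartitionRank F m k r ((range m).biUnion F) = k := by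
  have hfull : ∀ i ∈ range m, min #((range m).biUnion F ∩ F i) r = r := fun i hi => by
    rw [inter_eq_right.2 (subset_biUnion_of_mem F hi)]
    exact min_eq_right (hF i hi)
  rw [truncPartitionRank, sum_congr rfl hfull, sum_const, card_range, smul_eq_mul]
  exact min_eq_left hkm

theorem truncPartitionRank_of_subset (hF : (range m : Set ℕ).PairwiseDisjoint F) (hrk : r ≤ k)
    {i : ℕ} (hi : i ∈ range m) {T : Finset ℕ} (hT : T ⊆ F i) :
    truncPartitionRank F m k r T = min #T r := by
  have hsum : ∑ j ∈ range m, min #(T ∩ F j) r = min #T r := by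
    rw [sum_eq_single_of_mem i hi, inter_eq_left.2 hT]
    intro j hj hji
    rw [disjoint_iff_inter_eq_empty.1 ((hF hi hj hji.symm).mono_left hT), card_empty,
      Nat.zero_min]
  rw [truncPartitionRank, hsum]
  exact min_eq_right ((min_le_right _ _).trans hrk)

theorem hasLocality_truncPartitionRank (hF : (range m : Set ℕ).PairwiseDisjoint F)
    {δ : ℕ} (hδ : 2 ≤ δ) (hrk : r ≤ k) (hcard : ∀ i ∈ range m, r + δ - 1 ≤ #(F i)) :
    HasLocality ((range m).biUnion F) (truncPartitionRank F m k r) r δ := by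
  intro x hx
  obtain ⟨i, hi, hxi⟩ := mem_biUnion.1 hx
  obtain ⟨S, hxS, hSF, hS⟩ := exists_subsuperset_card_eq (singleton_subset_iff.2 hxi)
    (by rw [card_singleton]; omega) (hcard i hi)
  have hρ : ∀ T ⊆ S, truncPartitionRank F m k r T = min #T r := fun T hT =>
    truncPartitionRank_of_subset hF hrk hi (hT.trans hSF)
  refine ⟨S, hSF.trans (subset_biUnion_of_mem F hi), singleton_subset_iff.1 hxS, ?_, hS.le, ?_⟩
  · intro y hy
    rw [hρ _ (erase_subset y S), hρ S subset_rfl, card_erase_of_mem hy]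
    omega
  · intro L hL hLS l hl hlL
    rw [hρ _ (insert_subset hl hL), hρ L hL, card_insert_of_notMem hlL]
    omega

theorem exists_card_add_mul_le (hF : (range m : Set ℕ).PairwiseDisjoint F) {Y : Finset ℕ}
    (hY : Y ⊆ (range m).biUnion F) :
    ∃ T : Finset ℕ, #T * r ≤ ∑ i ∈ range m, min #(Y ∩ F i) r ∧
      #Y + #T * r ≤ ∑ i ∈ T, #(F i) + ∑ i ∈ range m, min #(Y ∩ F i) r := by
  set T := (range m).filter fun i => r ≤ #(Y ∩ F i)
  set T' := (range m).filter fun i => ¬r ≤ #(Y ∩ F i)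
  have hmin : ∑ i ∈ T, min #(Y ∩ F i) r + ∑ i ∈ T', min #(Y ∩ F i) r =
      ∑ i ∈ range m, min #(Y ∩ F i) r := sum_filter_add_sum_filter_not _ _ _
  have hcard :
      ∑ i ∈ T, #(Y ∩ F i) + ∑ i ∈ T', #(Y ∩ F i) = ∑ i ∈ range m, #(Y ∩ F i) :=
    sum_filter_add_sum_filter_not _ _ _
  have hfull : ∑ i ∈ T, min #(Y ∩ F i) r = #T * r := by
    rw [sum_congr rfl fun i hi => min_eq_right (mem_filter.1 hi).2, sum_const, smul_eq_mul]
  have hpart : ∑ i ∈ T', min #(Y ∩ F i) r = ∑ i ∈ T', #(Y ∩ F i) :=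
    sum_congr rfl fun i hi => min_eq_left (not_le.1 (mem_filter.1 hi).2).le
  have hblocks : ∑ i ∈ T, #(Y ∩ F i) ≤ ∑ i ∈ T, #(F i) :=
    sum_le_sum fun i _ => card_le_card inter_subset_right
  have hY' := sum_card_inter_eq_card_inter_biUnion hF Y
  rw [inter_eq_left.2 hY] at hY'
  exact ⟨T, by omega, by omega⟩

end TruncPartitionRank

theorem dmin_eq_card_sub {E Y₀ : Finset ℕ} {ρ : Finset ℕ → ℕ}
    (hmono : ∀ X ⊆ E, ρ X ≤ ρ E) (hY₀E : Y₀ ⊆ E) (hY₀ : ρ Y₀ < ρ E)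
    (hmax : ∀ Y ⊆ E, ρ Y < ρ E → #Y ≤ #Y₀) :
    dmin E ρ = #E - #Y₀ := by
  have hcompl : E \ (E \ Y₀) = Y₀ := Finset.sdiff_sdiff_eq_self hY₀E
  have hlower : ∀ C ⊆ E, ρ (E \ C) < ρ E → #E - #Y₀ ≤ #C := fun C hCE hC => by
    have := hmax _ sdiff_subset hC
    rw [card_sdiff_of_subset hCE] at this
    omega
  -- `E \ Y₀` is a minimal complement of a non-spanning set because `Y₀` is a largest one.
  have hmin : ∀ C' ⊂ E \ Y₀, ρ (E \ C') = ρ E := fun C' hC' => by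
    have hC'E := hC'.subset.trans sdiff_subset
    refine le_antisymm (hmono _ sdiff_subset) (not_lt.1 fun h => ?_)
    have := hlower C' hC'E h
    have := card_lt_card hC'
    rw [card_sdiff_of_subset hY₀E] at this
    omega
  have hmem : #E - #Y₀ ∈ {c : ℕ | ∃ C, C ⊆ E ∧ ρ (E \ C) < ρ E ∧
      (∀ C', C' ⊂ C → ρ (E \ C') = ρ E) ∧ #C = c} :=
    ⟨E \ Y₀, sdiff_subset, by rwa [hcompl], hmin, card_sdiff_of_subset hY₀E⟩
  refine le_antisymm (Nat.sInf_le hmem) (le_csInf ⟨_, hmem⟩ ?_)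
  rintro _ ⟨C, hCE, hC, -, rfl⟩
  exact hlower C hCE hC

def blockStart (c v i : ℕ) : ℕ := i * c + min i v

/-- `block c v 0, block c v 1, …` are consecutive intervals, the first `v` of length `c + 1` and
the others of length `c`. -/
def block (c v i : ℕ) : Finset ℕ := Ico (blockStart c v i) (blockStart c v (i + 1))

section Block

variable {c v : ℕ}

theorem blockStart_succ (c v i : ℕ) :
    blockStart c v (i + 1) = blockStart c v i + (c + if i < v then 1 else 0) := by
  unfold blockStart
  split_ifs <;> rw [add_one_mul] <;> omega

theorem blockStart_mono : Monotone (blockStart c v) :=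
  monotone_nat_of_le_succ fun i => by rw [blockStart_succ]; omega

theorem card_block (c v i : ℕ) : #(block c v i) = c + if i < v then 1 else 0 := by
  rw [block, Nat.card_Ico, blockStart_succ]
  omega

theorem pairwise_disjoint_block : Pairwise fun i j => Disjoint (block c v i) (block c v j) := by
  intro i j hij
  wlog h : i < j generalizing i j
  · exact (this hij.symm (by omega)).symm
  have := blockStart_mono (c := c) (v := v) (show i + 1 ≤ j from h)
  exact disjoint_left.2 fun x hx hx' => by simp only [block, mem_Ico] at hx hx'; omega

theorem biUnion_block (M : ℕ) : (range M).biUnion (block c v) = range (blockStart c v M) := by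
  induction M with
  | zero => simp [blockStart]
  | succ M ih =>
    rw [range_add_one, biUnion_insert, ih, union_comm, range_eq_Ico, range_eq_Ico, block,
      Ico_union_Ico_eq_Ico (Nat.zero_le _) (blockStart_mono (Nat.le_succ M))]

theorem sum_card_block_le (T : Finset ℕ) : ∑ i ∈ T, #(block c v i) ≤ blockStart c v #T := by
  have hlong : #(T.filter (· < v)) ≤ min #T v :=
    le_min (card_filter_le T _) ((card_le_card fun i hi => mem_range.2 (mem_filter.1 hi).2).trans
      (card_range v).le)
  simp only [card_block, sum_add_distrib, sum_const, smul_eq_mul, sum_boole, Nat.cast_id,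
    blockStart]
  omega

theorem blockStart_add_mul_le {r j K : ℕ} (hjK : j ≤ K) (hrc : r ≤ c) :
    blockStart c v j + K * r ≤ blockStart c v K + j * r := by
  obtain ⟨d, rfl⟩ := Nat.exists_eq_add_of_le hjK
  have : d * r ≤ d * c := Nat.mul_le_mul_left d hrc
  simp only [blockStart, add_mul]
  omega

theorem sum_min_card_range_inter_block {m r K t : ℕ} (hKm : K < m) (htr : t ≤ r)
    (hrc : r ≤ c) :
    ∑ i ∈ range m, min #(range (blockStart c v K + t) ∩ block c v i) r = K * r + t := by
  have hcard : ∀ i, #(range (blockStart c v K + t) ∩ block c v i) =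
      min (blockStart c v K + t) (blockStart c v (i + 1)) - blockStart c v i := fun i => by
    rw [block, range_eq_Ico, Ico_inter_Ico, Nat.card_Ico, Nat.zero_max]
  have hstep : ∀ i, blockStart c v i + c ≤ blockStart c v (i + 1) := fun i => by
    rw [blockStart_succ]; omega
  have hlow : ∀ i ∈ range K, min #(range (blockStart c v K + t) ∩ block c v i) r = r :=
    fun i hi => by
      have := blockStart_mono (c := c) (v := v) (show i + 1 ≤ K from mem_range.1 hi)
      have := hstep i
      rw [hcard]
      omega
  have hhigh : ∀ i ∈ Ico (K + 1) m, min #(range (blockStart c v K + t) ∩ block c v i) r = 0 :=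
    fun i hi => by
      have := blockStart_mono (c := c) (v := v) (mem_Ico.1 hi).1
      have := hstep K
      rw [hcard]
      omega
  have hK := hstep K
  rw [← sum_range_add_sum_Ico _ hKm, sum_range_succ, sum_congr rfl hlow, sum_congr rfl hhigh,
    sum_const, card_range, smul_eq_mul, sum_const_zero, hcard]
  omega

theorem blockStart_add_le {K M t : ℕ} (hKM : K < M) (htc : t ≤ c) :
    blockStart c v K + t ≤ blockStart c v M := by
  have := blockStart_succ c v K
  have := blockStart_mono (c := c) (v := v) (show K + 1 ≤ M from hKM)
  omega

end Block

/-- A largest set of rank `< k` fills the first `K` blocks and has `t` further elements. -/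
theorem dmin_truncPartitionRank_block {c v m k r K t : ℕ} (hrc : r ≤ c)
    (hKt : K * r + t + 1 = k) (htr : t < r) (hKm : K < m) :
    dmin ((range m).biUnion (block c v)) (truncPartitionRank (block c v) m k r) =
      blockStart c v m - (blockStart c v K + t) := by
  have hkm : k ≤ m * r := by
    have := Nat.mul_le_mul_right r (show K + 1 ≤ m from hKm)
    rw [add_one_mul] at this
    omega
  have hρE : truncPartitionRank (block c v) m k r ((range m).biUnion (block c v)) = k :=
    truncPartitionRank_biUnion (fun i _ => by rw [card_block]; omega) hkm
  have hmax : ∀ Y ⊆ (range m).biUnion (block c v),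
      truncPartitionRank (block c v) m k r Y < k → #Y ≤ blockStart c v K + t := by
    intro Y hY hρY
    unfold truncPartitionRank at hρY
    obtain ⟨T, hT, hYT⟩ :=
      exists_card_add_mul_le (r := r) (pairwise_disjoint_block.set_pairwise _) hY
    have hTK : #T ≤ K := by
      by_contra h
      have := Nat.mul_le_mul_right r (show K + 1 ≤ #T by omega)
      rw [add_one_mul] at this
      omega
    have := sum_card_block_le (c := c) (v := v) T
    have := blockStart_add_mul_le (v := v) hTK hrc
    omega
  rw [dmin_eq_card_sub (fun _ h => truncPartitionRank_mono h)
      (Y₀ := range (blockStart c v K + t)), biUnion_block, card_range, card_range]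
  · rw [biUnion_block]
    exact range_subset_range.2 (blockStart_add_le hKm (htr.le.trans hrc))
  · rw [hρE, truncPartitionRank, sum_min_card_range_inter_block hKm htr.le hrc]
    omega
  · rw [hρE, card_range]
    exact hmax

theorem add_sub_one_div_mul_mem_Ico {d : ℕ} (hd : 0 < d) (x : ℕ) :
    (x + d - 1) / d * d ∈ Ico x (x + d) := by
  have := Nat.div_add_mod (x + d - 1) d
  have := Nat.mod_lt (x + d - 1) hd
  rw [mem_Ico, mul_comm]
  omega

theorem lt_of_mul_sub_lt_mul_sub {k n r e w K N : ℕ} (hw : w = r + e) (hK : k ≤ K * r)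
    (hN : n ≤ N * w) (hkn : k + K * e ≤ n) (hlt : K * r - k < N * w - n) : K < N := by
  refine Nat.lt_of_mul_lt_mul_right (a := w) ?_
  have := mul_add K r e
  have := mul_add N r e
  subst hw
  omega

/-- The `n = (m + 1) w - b` elements fill `m` blocks of lengths `w + q` and `w + q + 1`. -/
theorem lt_and_blockStart_eq {n w m b q v : ℕ} (hw : 0 < w) (hm : 0 < m)
    (hN : (n + w - 1) / w = m + 1) (hb : b = (m + 1) * w - n) (hq : q = (w - b) / m)
    (hv : v = w - b - q * m) : v < m ∧ blockStart (w + q) v m = n := by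
  have hnN := add_sub_one_div_mul_mem_Ico hw n
  rw [hN, mem_Ico, add_one_mul] at hnN
  have hqv := Nat.div_add_mod (w - b) m
  have := Nat.mod_lt (w - b) hm
  rw [← hq] at hqv
  rw [mul_comm] at hv
  rw [add_one_mul] at hb
  refine ⟨by omega, ?_⟩
  rw [blockStart, min_eq_right (by omega), mul_add]
  omega

theorem cast_sub_blockStart_add {n k r δ q v K t : ℕ} (hδ : 1 ≤ δ) (hKt : K * r + t + 1 = k)
    (hle : blockStart (r + δ - 1 + q) v K + t ≤ n) :
    ((n - (blockStart (r + δ - 1 + q) v K + t) : ℕ) : ℤ) =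
      n - k + 1 - K * (q + δ - 1) - (min v K : ℕ) := by
  subst hKt
  rw [Nat.cast_sub hle, blockStart, min_comm]
  push_cast [Nat.cast_sub (show 1 ≤ r + δ by omega)]
  ring

theorem dmax_lower_bound_general (n k r δ ceilK ceilN a b m q v : ℕ)
    (hr0 : 0 < r) (hrk : r < k) (hδ : 2 ≤ δ)
    (hceilK : ceilK = (k + r - 1) / r)
    (hceilN : ceilN = (n + (r + δ - 1) - 1) / (r + δ - 1))
    (hkn : k + ceilK * (δ - 1) ≤ n)
    (ha : a = ceilK * r - k)
    (hb : b = ceilN * (r + δ - 1) - n)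
    (hab : a < b)
    (hm : m = ceilN - 1)
    (hq : q = (r + δ - 1 - b) / m)
    (hv : v = (r + δ - 1 - b) - q * m) :
    ∃ (E : Finset ℕ) (ρ : Finset ℕ → ℕ),
      IsRankFn E ρ ∧ E.card = n ∧ ρ E = k ∧ HasLocality E ρ r δ ∧
      (dmin E ρ : ℤ) = (n : ℤ) - (k : ℤ) + 1 -
        ((ceilK : ℤ) - 1) * ((q : ℤ) + (δ : ℤ) - 1) - (min v (ceilK - 1) : ℕ) := by
  set w := r + δ - 1
  have hkK := add_sub_one_div_mul_mem_Ico hr0 k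
  have hnN := add_sub_one_div_mul_mem_Ico (show 0 < w by omega) n
  rw [← hceilK, mem_Ico] at hkK
  rw [← hceilN, mem_Ico] at hnN
  obtain ⟨hkK, hKk⟩ := hkK
  have hK1 : 1 ≤ ceilK := Nat.pos_of_ne_zero fun h => by rw [h, zero_mul] at hkK; omega
  have hKN : ceilK < ceilN :=
    lt_of_mul_sub_lt_mul_sub (by omega) hkK hnN.1 hkn (ha ▸ hb ▸ hab)
  obtain ⟨hvm, hn⟩ := lt_and_blockStart_eq (show 0 < w by omega) (by omega)
    (by omega : (n + w - 1) / w = m + 1) (by rw [hb]; congr; omega) hq hv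
  obtain ⟨t, hKt, htr⟩ : ∃ t, (ceilK - 1) * r + t + 1 = k ∧ t < r := by
    rw [Nat.sub_one_mul]
    exact ⟨k - 1 - (ceilK * r - r), by omega, by omega⟩
  set c := w + q
  have hE : range n = (range m).biUnion (block c v) := by rw [biUnion_block, hn]
  have hdisj := (pairwise_disjoint_block (c := c) (v := v)).set_pairwise (range m : Set ℕ)
  have hcard : ∀ i ∈ range m, w ≤ #(block c v i) := fun i _ => by rw [card_block]; omega
  refine ⟨range n, truncPartitionRank (block c v) m k r, isRankFn_truncPartitionRank hdisj _,
    card_range n, ?_, ?_, ?_⟩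
  · rw [hE]
    refine truncPartitionRank_biUnion (fun i hi => (hcard i hi).trans' (by omega)) ?_
    exact hkK.trans (Nat.mul_le_mul_right r (by omega))
  · rw [hE]
    exact hasLocality_truncPartitionRank hdisj hδ hrk.le hcard
  · have hle := blockStart_add_le (c := c) (v := v) (show ceilK - 1 < m by omega)
      (show t ≤ c by omega)
    rw [hE, dmin_truncPartitionRank_block (show r ≤ c by omega) hKt htr (by omega), hn,
      cast_sub_blockStart_add (by omega) hKt (hn ▸ hle), Nat.cast_sub hK1, Nat.cast_one]

/-- Lower bound for `d_max`: with `0 < r < k ≤ n − ⌈k/r⌉(δ−1)`,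
`δ ≥ 2`, `b > a` where `a = ⌈k/r⌉r − k`, `b = ⌈n/(r+δ−1)⌉(r+δ−1) − n`,
`m = ⌈n/(r+δ−1)⌉ − 1`, `v = r+δ−1−b − ⌊(r+δ−1−b)/m⌋·m`: if
`δ−1 > (⌈k/r⌉−1)⌊(r+δ−1−b)/m⌋ + min{v, ⌈k/r⌉−1}`, then there exists an
`(n,k,d,r,δ)`-matroid with
`d = n − k + 1 − (⌈k/r⌉−1)(⌊(r+δ−1−b)/m⌋ + δ−1) − min{v, ⌈k/r⌉−1}`. -/
theorem dmax_lower_bound (n k r δ ceilK ceilN a b m q v : ℕ)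
    (hr0 : 0 < r) (hrk : r < k) (hδ : 2 ≤ δ)
    (hceilK : ceilK = (k + r - 1) / r)
    (hceilN : ceilN = (n + (r + δ - 1) - 1) / (r + δ - 1))
    (hkn : k + ceilK * (δ - 1) ≤ n)
    (ha : a = ceilK * r - k)
    (hb : b = ceilN * (r + δ - 1) - n)
    (hab : a < b)
    (hm : m = ceilN - 1)
    (hq : q = (r + δ - 1 - b) / m)
    (hv : v = (r + δ - 1 - b) - q * m)
    (hcond : (ceilK - 1) * q + min v (ceilK - 1) < δ - 1) :
    ∃ (E : Finset ℕ) (ρ : Finset ℕ → ℕ),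
      IsRankFn E ρ ∧ E.card = n ∧ ρ E = k ∧ HasLocality E ρ r δ ∧
      (dmin E ρ : ℤ) = (n : ℤ) - (k : ℤ) + 1 -
        ((ceilK : ℤ) - 1) * ((q : ℤ) + (δ : ℤ) - 1) - (min v (ceilK - 1) : ℕ) :=
  dmax_lower_bound_general n k r δ ceilK ceilN a b m q v hr0 hrk hδ hceilK hceilN hkn ha hb hab hm
    hq hv
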